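/- arXiv:2007.00359 — 5 statements merged into one kernel-verified Lean document; each statement's English description precedes it below -/
import Mathlib

section
/- Let N be an NFA with language L = L(N) such that N is a co-RFA with no empty states: every state q is nonempty (W_{q,F} ≠ ∅) and the left language of every state q is a right quotient of L (∃ u, W_{I,q} = Lu⁻¹). Then the right automata-based quasiorder coincides with the right language-based Nerode quasiorder: for all u, v ∈ Σ*, post_u(I) ⊆ post_v(I) if and only if u⁻¹L ⊆ v⁻¹L. -/
/-- Left quotient (residual) u⁻¹L = {w | uw ∈ L}. -/
def leftQuot {α : Type*} (L : Set (List α)) (u : List α) : Set (List α) :=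
  {w | u ++ w ∈ L}

/-- Right quotient Lu⁻¹ = {w | wu ∈ L}. -/
def rightQuot {α : Type*} (L : Set (List α)) (u : List α) : Set (List α) :=
  {w | w ++ u ∈ L}

private lemma evalFrom_append' {α σ : Type*} (M : NFA α σ) (S : Set σ) (x y : List α) :
    M.evalFrom S (x ++ y) = M.evalFrom (M.evalFrom S x) y := by
  simp [NFA.evalFrom, List.foldl_append]

private lemma stepSet_mono {α σ : Type*} (M : NFA α σ) {S T : Set σ} (h : S ⊆ T) (a : α) :
    M.stepSet S a ⊆ M.stepSet T a := by
  intro q hq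
  rcases Set.mem_iUnion₂.1 hq with ⟨s, hs, hqs⟩
  exact Set.mem_iUnion₂.2 ⟨s, h hs, hqs⟩

private lemma evalFrom_mono {α σ : Type*} (M : NFA α σ) {S T : Set σ} (h : S ⊆ T)
    (x : List α) : M.evalFrom S x ⊆ M.evalFrom T x := by
  induction x generalizing S T with
  | nil => simpa using h
  | cons a x ih =>
      simp only [NFA.evalFrom, List.foldl_cons] at *
      exact ih (stepSet_mono M h a)

/-- For a co-RFA with no empty states, the automata-based quasiorder coincides with
the Nerode quasiorder. -/
theorem coRFA_autQO_eq_nerodeQO {α σ : Type*} [Fintype σ]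
    (M : NFA α σ) (L : Set (List α))
    (hL : L = {w : List α | (M.evalFrom M.start w ∩ M.accept).Nonempty})
    (hnonempty : ∀ q : σ, ∃ w : List α, (M.evalFrom {q} w ∩ M.accept).Nonempty)
    (hcoRFA : ∀ q : σ, ∃ u : List α,
      {w : List α | q ∈ M.evalFrom M.start w} = rightQuot L u) :
    ∀ u v : List α,
      M.evalFrom M.start u ⊆ M.evalFrom M.start v ↔ leftQuot L u ⊆ leftQuot L v := by
  intro u v
  constructor
  · intro h w hw
    rw [leftQuot, Set.mem_setOf_eq, hL, Set.mem_setOf_eq, evalFrom_append'] at *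
    rcases hw with ⟨q, hq1, hq2⟩
    exact ⟨q, evalFrom_mono M h w hq1, hq2⟩
  · intro h q hq
    obtain ⟨u', hu'⟩ := hcoRFA q
    have hu : u ∈ rightQuot L u' := by rw [← hu']; exact hq
    have hv : v ∈ rightQuot L u' := h hu
    have : v ∈ {w : List α | q ∈ M.evalFrom M.start w} := hu' ▸ hv
    exact this
end

section
/- Let L ⊆ Σ* be a regular language and let ≼₁ and ≼₂ be two right L-preserving quasiorders on Σ* inducing finitely many principals, with ≼₁ ⊆ ≼₂. If the principal cl_{≼₁}(u) is L-composite (i.e., u⁻¹L = ⋃_{x ≺₁ u} x⁻¹L), then either cl_{≼₂}(u) is L-composite, or there exists x with x ≺₁ u and cl_{≼₂}(x) = cl_{≼₂}(u). -/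
/-- Upper closure of a set of words under a relation. -/
def clS {α : Type*} (r : List α → List α → Prop) (S : Set (List α)) : Set (List α) :=
  {w | ∃ x ∈ S, r x w}

/-- Strict version of a quasiorder. -/
def strict {α : Type*} (r : List α → List α → Prop) (x u : List α) : Prop :=
  r x u ∧ ¬ r u x

/-- A principal cl_≼(u) is L-composite. -/
def LComposite {α : Type*} (r : List α → List α → Prop) (L : Set (List α))
    (u : List α) : Prop :=
  leftQuot L u = ⋃ x ∈ {x | strict r x u}, leftQuot L x

lemma rightCompatWord {α : Type*} {r : List α → List α → Prop}
    (hright : ∀ u v : List α, ∀ a : α, r u v → r (u ++ [a]) (v ++ [a])) :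
    ∀ (w x u : List α), r x u → r (x ++ w) (u ++ w) := by
  intro w
  induction w with
  | nil => intro x u h; simpa using h
  | cons a w ih =>
    intro x u h
    have := ih (x ++ [a]) (u ++ [a]) (hright x u a h)
    simpa [List.append_assoc] using this

lemma nerodeSub {α : Type*} {r : List α → List α → Prop} {L : Set (List α)}
    (hright : ∀ u v : List α, ∀ a : α, r u v → r (u ++ [a]) (v ++ [a]))
    (hpres : clS r L = L) {x u : List α} (h : r x u) :
    leftQuot L x ⊆ leftQuot L u := by
  intro w hw
  have : u ++ w ∈ clS r L := ⟨x ++ w, hw, rightCompatWord hright w x u h⟩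
  rwa [hpres] at this

theorem composite_coarser {α : Type*} [Fintype α] (L : Set (List α))
    (hreg : Language.IsRegular (L : Language α))
    (r₁ r₂ : List α → List α → Prop)
    (hrefl₁ : Reflexive r₁) (htrans₁ : Transitive r₁)
    (hrefl₂ : Reflexive r₂) (htrans₂ : Transitive r₂)
    (hright₁ : ∀ u v : List α, ∀ a : α, r₁ u v → r₁ (u ++ [a]) (v ++ [a]))
    (hright₂ : ∀ u v : List α, ∀ a : α, r₂ u v → r₂ (u ++ [a]) (v ++ [a]))
    (hpres₁ : clS r₁ L = L) (hpres₂ : clS r₂ L = L)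
    (hfin₁ : (Set.range fun u : List α => {w | r₁ u w}).Finite)
    (hfin₂ : (Set.range fun u : List α => {w | r₂ u w}).Finite)
    (hsub : ∀ u v : List α, r₁ u v → r₂ u v)
    (u : List α) (hcomp : LComposite r₁ L u) :
    LComposite r₂ L u ∨
      ∃ x : List α, strict r₁ x u ∧ {w | r₂ x w} = {w | r₂ u w} := by
  by_cases hx : ∃ x : List α, strict r₁ x u ∧ {w | r₂ x w} = {w | r₂ u w}
  · exact Or.inr hx
  · left
    push_neg at hx
    unfold LComposite at hcomp ⊢
    ext w
    simp only [Set.mem_iUnion, Set.mem_setOf_eq, exists_prop]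
    constructor
    · intro hw
      rw [hcomp] at hw
      simp only [Set.mem_iUnion, Set.mem_setOf_eq, exists_prop] at hw
      obtain ⟨x, hx1, hx2⟩ := hw
      refine ⟨x, ⟨hsub _ _ hx1.1, ?_⟩, hx2⟩
      intro h2ux
      apply hx x hx1
      ext y
      simp only [Set.mem_setOf_eq]
      exact ⟨fun h => htrans₂ h2ux h, fun h => htrans₂ (hsub _ _ hx1.1) h⟩
    · rintro ⟨x, hxu, hw⟩
      exact nerodeSub hright₂ hpres₂ hxu.1 hw
end

section
/- Let L ⊆ Σ* be a regular language and ≼₁ ⊆ ≼₂ two right L-preserving quasiorders, each inducing finitely many principals. Then the number of L-prime principals of ≼₁ is at least the number of L-prime principals of ≼₂: |{cl_{≼₁}(u) | u ∈ Σ*, cl_{≼₁}(u) is L-prime}| ≥ |{cl_{≼₂}(u) | u ∈ Σ*, cl_{≼₂}(u) is L-prime}|. -/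
section Aux
variable {α : Type*} {L : Set (List α)} {r : List α → List α → Prop}

lemma rext (hright : ∀ u v : List α, ∀ a : α, r u v → r (u ++ [a]) (v ++ [a])) :
    ∀ (w u v : List α), r u v → r (u ++ w) (v ++ w) := by
  intro w
  induction w with
  | nil => intro u v h; simpa using h
  | cons a t ih =>
    intro u v h
    have := ih (u ++ [a]) (v ++ [a]) (hright u v a h)
    simpa using this

lemma quotMono (hright : ∀ u v : List α, ∀ a : α, r u v → r (u ++ [a]) (v ++ [a]))
    (hpres : clS r L = L) {u v : List α} (h : r u v) :
    leftQuot L u ⊆ leftQuot L v := by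
  intro w hw
  have h2 : r (u ++ w) (v ++ w) := rext hright w u v h
  have hm : v ++ w ∈ clS r L := ⟨u ++ w, hw, h2⟩
  rw [hpres] at hm
  exact hm

/-- measure: number of principals (weakly) above the principal of u -/
noncomputable def pm (r : List α → List α → Prop) (u : List α) : ℕ :=
  {A ∈ Set.range (fun x : List α => {w | r x w}) | {w | r u w} ⊆ A}.ncard

lemma pm_lt (hrefl : Reflexive r) (htrans : Transitive r)
    (hfin : (Set.range fun u : List α => {w | r u w}).Finite)
    {x u : List α} (h : strict r x u) : pm r x < pm r u := by
  apply Set.ncard_lt_ncard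
  · constructor
    · rintro A ⟨hA, hxA⟩
      refine ⟨hA, ?_⟩
      intro w hw
      exact hxA (htrans h.1 hw)
    · intro hcon
      have hmem : {w | r u w} ∈ {A ∈ Set.range (fun x : List α => {w | r x w}) |
          {w | r u w} ⊆ A} := ⟨⟨u, rfl⟩, subset_rfl⟩
      have := (hcon hmem).2
      exact h.2 (this (hrefl x))
  · exact hfin.subset (fun A hA => hA.1)

lemma decomp (hrefl : Reflexive r) (htrans : Transitive r)
    (hfin : (Set.range fun u : List α => {w | r u w}).Finite) :
    ∀ (n : ℕ) (u : List α), pm r u ≤ n → ∀ w ∈ leftQuot L u,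
      ∃ v, r v u ∧ ¬ LComposite r L v ∧ w ∈ leftQuot L v := by
  intro n
  induction n using Nat.strong_induction_on with
  | _ n ih =>
    intro u hn w hw
    by_cases hc : LComposite r L u
    · rw [LComposite] at hc
      rw [hc] at hw
      simp only [Set.mem_iUnion] at hw
      obtain ⟨x, hx, hwx⟩ := hw
      have hlt : pm r x < n := lt_of_lt_of_le (pm_lt hrefl htrans hfin hx) hn
      obtain ⟨v, hvx, hvp, hwv⟩ := ih (pm r x) hlt x le_rfl w hwx
      exact ⟨v, htrans hvx hx.1, hvp, hwv⟩
    · exact ⟨u, hrefl u, hc, hw⟩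

end Aux

theorem card_prime_principals_antitone {α : Type*} [Fintype α] (L : Set (List α))
    (hreg : Language.IsRegular (L : Language α))
    (r₁ r₂ : List α → List α → Prop)
    (hrefl₁ : Reflexive r₁) (htrans₁ : Transitive r₁)
    (hrefl₂ : Reflexive r₂) (htrans₂ : Transitive r₂)
    (hright₁ : ∀ u v : List α, ∀ a : α, r₁ u v → r₁ (u ++ [a]) (v ++ [a]))
    (hright₂ : ∀ u v : List α, ∀ a : α, r₂ u v → r₂ (u ++ [a]) (v ++ [a]))
    (hpres₁ : clS r₁ L = L) (hpres₂ : clS r₂ L = L)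
    (hfin₁ : (Set.range fun u : List α => {w | r₁ u w}).Finite)
    (hfin₂ : (Set.range fun u : List α => {w | r₂ u w}).Finite)
    (hsub : ∀ u v : List α, r₁ u v → r₂ u v) :
    {P : Set (List α) | ∃ u : List α, P = {w | r₁ u w} ∧ ¬ LComposite r₁ L u}.ncard ≥
    {P : Set (List α) | ∃ u : List α, P = {w | r₂ u w} ∧ ¬ LComposite r₂ L u}.ncard := by
  set S₁ := {P : Set (List α) | ∃ u : List α, P = {w | r₁ u w} ∧ ¬ LComposite r₁ L u} with hS₁
  set S₂ := {P : Set (List α) | ∃ u : List α, P = {w | r₂ u w} ∧ ¬ LComposite r₂ L u} with hS₂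
  -- key: each r₂-prime u has an r₁-prime v with u ~₂ v
  have key : ∀ u : List α, ¬ LComposite r₂ L u →
      ∃ v, ¬ LComposite r₁ L v ∧ r₂ u v ∧ r₂ v u := by
    intro u hu
    -- the union is contained in the quotient
    have hUsub : (⋃ x ∈ {x | strict r₂ x u}, leftQuot L x) ⊆ leftQuot L u := by
      intro w hw
      simp only [Set.mem_iUnion] at hw
      obtain ⟨x, hx, hwx⟩ := hw
      exact quotMono hright₂ hpres₂ hx.1 hwx
    have hns : ¬ leftQuot L u ⊆ ⋃ x ∈ {x | strict r₂ x u}, leftQuot L x := by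
      intro h
      exact hu (le_antisymm h hUsub)
    obtain ⟨w, hwL, hwn⟩ := Set.not_subset.mp hns
    obtain ⟨v, hvu, hvp, hwv⟩ :=
      decomp hrefl₁ htrans₁ hfin₁ (pm r₁ u) u le_rfl w hwL
    have h2vu : r₂ v u := hsub _ _ hvu
    have h2uv : r₂ u v := by
      by_contra h
      apply hwn
      simp only [Set.mem_iUnion]
      exact ⟨v, ⟨h2vu, h⟩, hwv⟩
    exact ⟨v, hvp, h2uv, h2vu⟩
  -- define the injection by choice
  have key' : ∀ P : Set (List α), ∃ Q : Set (List α), P ∈ S₂ →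
      Q ∈ S₁ ∧ ∃ u v : List α, P = {w | r₂ u w} ∧ Q = {w | r₁ v w} ∧ r₂ u v ∧ r₂ v u := by
    intro P
    by_cases hP : P ∈ S₂
    · obtain ⟨u, hPu, hup⟩ := hP
      obtain ⟨v, hvp, h2uv, h2vu⟩ := key u hup
      exact ⟨{w | r₁ v w}, fun _ => ⟨⟨v, rfl, hvp⟩, u, v, hPu, rfl, h2uv, h2vu⟩⟩
    · exact ⟨∅, fun h => absurd h hP⟩
  choose f hf using key'
  have h1fin : S₁.Finite := hfin₁.subset (by rintro P ⟨u, hP, -⟩; exact ⟨u, hP.symm⟩)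
  have hmaps : ∀ P ∈ S₂, f P ∈ S₁ := fun P hP => (hf P hP).1
  have hinj : Set.InjOn f S₂ := by
    intro P hP P' hP' hQ
    obtain ⟨-, u, v, hPu, hQv, huv, hvu⟩ := hf P hP
    obtain ⟨-, u', v', hPu', hQv', huv', hvu'⟩ := hf P' hP'
    have hvv : {w | r₁ v w} = {w | r₁ v' w} := by rw [← hQv, ← hQv', hQ]
    have h1vv' : r₁ v v' := by
      have : v' ∈ {w | r₁ v w} := hvv ▸ (hrefl₁ v' : r₁ v' v')
      exact this
    have h1v'v : r₁ v' v := by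
      have : v ∈ {w | r₁ v' w} := hvv.symm ▸ (hrefl₁ v : r₁ v v)
      exact this
    have huu' : r₂ u u' := htrans₂ huv (htrans₂ (hsub _ _ h1vv') hvu')
    have hu'u : r₂ u' u := htrans₂ huv' (htrans₂ (hsub _ _ h1v'v) hvu)
    rw [hPu, hPu']
    ext w
    exact ⟨fun h => htrans₂ hu'u h, fun h => htrans₂ huu' h⟩
  exact Set.ncard_le_ncard_of_injOn f hmaps hinj h1fin
end

section
/- Let L be a language and u a word such that the quotient u⁻¹L is composite, i.e., u⁻¹L = ⋃ {x⁻¹L | x ∈ Σ*, x⁻¹L ⊊ u⁻¹L}. Then the Nerode principal of u is the intersection of the principals of the words strictly below it: cl_{≼_L}(u) = ⋂ {cl_{≼_L}(x) | x ∈ Σ*, x⁻¹L ⊊ u⁻¹L}, where cl_{≼_L}(w) = {v | w⁻¹L ⊆ v⁻¹L}. -/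
/-- If u⁻¹L is composite, then the Nerode principal of u is the intersection of the
principals of the words strictly below u. -/
theorem composite_principal_eq_iInter {α : Type*} [Fintype α]
    (L : Set (List α)) (u : List α)
    (hcomp : leftQuot L u = ⋃ x ∈ {x : List α | leftQuot L x ⊂ leftQuot L u}, leftQuot L x) :
    {v : List α | leftQuot L u ⊆ leftQuot L v} =
      ⋂ x ∈ {x : List α | leftQuot L x ⊂ leftQuot L u},
        {v : List α | leftQuot L x ⊆ leftQuot L v} := by
  ext v
  simp only [Set.mem_setOf_eq, Set.mem_iInter]
  constructor
  · intro hv x hx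
    exact hx.subset.trans hv
  · intro hv w hw
    rw [hcomp] at hw
    simp only [Set.mem_iUnion, Set.mem_setOf_eq] at hw
    obtain ⟨x, hx, hwx⟩ := hw
    exact hv x hx hwx
end

section
/- Let N = (Q, Σ, δ, I, F) be an NFA with L = L(N). If for all u, v ∈ Σ*, u⁻¹L ⊆ v⁻¹L implies post_u(I) ⊆ post_v(I), then for every state q ∈ Q the left language of q is closed under the right Nerode quasiorder: cl_{≼_L}(W_{I,q}) = W_{I,q}. -/
/-- Upper closure of a set of words under the right Nerode quasiorder of L. -/
def clNerode {α : Type*} (L : Set (List α)) (S : Set (List α)) : Set (List α) :=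
  {w | ∃ x ∈ S, leftQuot L x ⊆ leftQuot L w}

/-- If the Nerode quasiorder refines the automata-based one, then the left language
of every state is closed under the right Nerode quasiorder. -/
theorem nerode_refines_implies_closed_leftLangs {α σ : Type*} [Fintype σ]
    (M : NFA α σ) (L : Set (List α))
    (hL : L = {w : List α | (M.evalFrom M.start w ∩ M.accept).Nonempty})
    (h : ∀ u v : List α,
      leftQuot L u ⊆ leftQuot L v → M.evalFrom M.start u ⊆ M.evalFrom M.start v) :
    ∀ q : σ,
      clNerode L {w : List α | q ∈ M.evalFrom M.start w} =
        {w : List α | q ∈ M.evalFrom M.start w} := by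
  intro q
  ext w
  constructor
  · rintro ⟨x, hx, hsub⟩
    exact h x w hsub hx
  · intro hw
    exact ⟨w, hw, fun _ h => h⟩
end
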